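/- Let f : ℝⁿ → ℝ ∪ {∞} be proper, closed, and ρ-weakly convex for ρ > 0, and let 0 < η < 1/ρ. Then the gradient of the Moreau envelope f^η is L-Lipschitz with L = 1/η if ηρ ≤ 1/2, and L = ρ/(1 − ηρ) if ηρ ≥ 1/2. -/

import Mathlib

/-!
The proximal objective `y ↦ f y + ‖y - x‖² / (2η)` is `(1/η - ρ)`-strongly convex, so comparing
its minimizers at `x` and `y` shows that `prox` is cocoercive:
`(1 - ηρ) ‖prox x - prox y‖² ≤ ⟪prox x - prox y, x - y⟫`.
With `u = x - y`, `v = prox x - prox y` and `c = 1 - ηρ` this gives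
`‖u - v‖² ≤ ‖u‖² - (2c - 1) ‖v‖²`, which is at most `‖u‖²` when `c ≥ 1/2`; when `c ≤ 1/2`,
Cauchy–Schwarz gives `c ‖v‖ ≤ ‖u‖` and hence `‖u - v‖ ≤ (1 - c)/c ‖u‖`. Scaling by `1/η` yields
the two constants.
-/

open Filter Topology Set

variable {E : Type*} [NormedAddCommGroup E] [InnerProductSpace ℝ E]

lemma StrongConvexOn.add_sq_le_of_isMinOn {s : Set E} {m : ℝ} {φ : E → ℝ} {p z : E}
    (hφ : StrongConvexOn s m φ) (hp : IsMinOn φ s p) (hps : p ∈ s) (hzs : z ∈ s) :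
    φ p + m / 2 * ‖z - p‖ ^ 2 ≤ φ z := by
  have hstep : ∀ t ∈ Ioo (0 : ℝ) 1, φ p + (1 - t) * (m / 2 * ‖z - p‖ ^ 2) ≤ φ z := by
    rintro t ⟨ht0, ht1⟩
    have hconv := hφ.2 hzs hps ht0.le (sub_nonneg.2 ht1.le) (add_sub_cancel t 1)
    have hmin := hp (hφ.1 hzs hps ht0.le (sub_nonneg.2 ht1.le) (add_sub_cancel t 1))
    simp only [smul_eq_mul, mem_ofPred_eq] at hconv hmin
    have hmul : t * (φ p + (1 - t) * (m / 2 * ‖z - p‖ ^ 2)) ≤ t * φ z := by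
      linear_combination hmin + hconv
    exact le_of_mul_le_mul_left hmul ht0
  have hlim : Tendsto (fun t : ℝ => φ p + (1 - t) * (m / 2 * ‖z - p‖ ^ 2)) (𝓝[>] 0)
      (𝓝 (φ p + (1 - 0) * (m / 2 * ‖z - p‖ ^ 2))) :=
    ((continuous_const.add ((continuous_const.sub continuous_id).mul continuous_const)).tendsto
      0).mono_left nhdsWithin_le_nhds
  simpa using le_of_tendsto hlim (eventually_of_mem (Ioo_mem_nhdsGT zero_lt_one) hstep)

lemma strongConvexOn_add_norm_sub_sq_div {f : E → ℝ} {ρ : ℝ} (η : ℝ)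
    (hwc : ConvexOn ℝ univ (fun z => f z + ρ / 2 * ‖z‖ ^ 2)) (x : E) :
    StrongConvexOn univ (1 / η - ρ) (fun y => f y + ‖y - x‖ ^ 2 / (2 * η)) := by
  rw [strongConvexOn_iff_convex]
  have hlin : ConvexOn ℝ univ (fun y => inner ℝ (-η⁻¹ • x) y) :=
    (innerₛₗ ℝ (-η⁻¹ • x)).convexOn convex_univ
  refine ((hwc.add hlin).add_const (‖x‖ ^ 2 / (2 * η))).congr fun y _ => ?_
  simp only [Pi.add_apply, norm_sub_sq_real, real_inner_smul_left, real_inner_comm x]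
  ring

lemma two_mul_inner_sub_sub_eq_norm_sub_sq (p q x y : E) :
    2 * inner ℝ (p - q) (x - y) = ‖q - x‖ ^ 2 - ‖p - x‖ ^ 2 + ‖p - y‖ ^ 2 - ‖q - y‖ ^ 2 := by
  simp only [norm_sub_sq_real, inner_sub_left, inner_sub_right]
  ring

lemma cocoercive_of_isMinOn_prox {f : E → ℝ} {ρ η : ℝ} (hη : 0 < η)
    (hwc : ConvexOn ℝ univ (fun z => f z + ρ / 2 * ‖z‖ ^ 2)) {prox : E → E}
    (hprox : ∀ x, IsMinOn (fun y => f y + ‖y - x‖ ^ 2 / (2 * η)) univ (prox x)) (x y : E) :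
    (1 - η * ρ) * ‖prox x - prox y‖ ^ 2 ≤ inner ℝ (prox x - prox y) (x - y) := by
  have hx := (strongConvexOn_add_norm_sub_sq_div η hwc x).add_sq_le_of_isMinOn (hprox x)
    (mem_univ _) (mem_univ (prox y))
  have hy := (strongConvexOn_add_norm_sub_sq_div η hwc y).add_sq_le_of_isMinOn (hprox y)
    (mem_univ _) (mem_univ (prox x))
  rw [norm_sub_rev (prox y)] at hx
  have hid := two_mul_inner_sub_sub_eq_norm_sub_sq (prox x) (prox y) x y
  have hsum : (1 / η - ρ) * ‖prox x - prox y‖ ^ 2 ≤ inner ℝ (prox x - prox y) (x - y) / η := by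
    linear_combination hx + hy - hid / (2 * η)
  calc (1 - η * ρ) * ‖prox x - prox y‖ ^ 2 = η * ((1 / η - ρ) * ‖prox x - prox y‖ ^ 2) := by
        field_simp
    _ ≤ η * (inner ℝ (prox x - prox y) (x - y) / η) := by gcongr
    _ = inner ℝ (prox x - prox y) (x - y) := by field_simp

section Cocoercive

variable {u v : E} {c : ℝ}

lemma norm_sub_sq_le_of_cocoercive (h : c * ‖v‖ ^ 2 ≤ inner ℝ v u) :
    ‖u - v‖ ^ 2 ≤ ‖u‖ ^ 2 - (2 * c - 1) * ‖v‖ ^ 2 := by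
  rw [norm_sub_sq_real, real_inner_comm]
  linarith

lemma norm_sub_le_of_cocoercive_of_half_le (h : c * ‖v‖ ^ 2 ≤ inner ℝ v u) (hc : 1 / 2 ≤ c) :
    ‖u - v‖ ≤ ‖u‖ := by
  have hsq := norm_sub_sq_le_of_cocoercive h
  exact sq_le_sq₀ (norm_nonneg _) (norm_nonneg _) |>.1 (by nlinarith [sq_nonneg ‖v‖])

lemma norm_sub_le_of_cocoercive_of_le_half (h : c * ‖v‖ ^ 2 ≤ inner ℝ v u) (hc0 : 0 < c)
    (hc : c ≤ 1 / 2) : ‖u - v‖ ≤ (1 - c) / c * ‖u‖ := by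
  have hcv : c * ‖v‖ ≤ ‖u‖ := by
    rcases (norm_nonneg v).eq_or_lt with hv | hv
    · rw [← hv, mul_zero]
      exact norm_nonneg u
    · have hcs := real_inner_le_norm v u
      exact le_of_mul_le_mul_right (by nlinarith) hv
  have hsq : c ^ 2 * ‖u - v‖ ^ 2 ≤ ((1 - c) * ‖u‖) ^ 2 := by
    have hsub := norm_sub_sq_le_of_cocoercive h
    nlinarith [mul_le_mul hcv hcv (by positivity) (norm_nonneg u)]
  rw [div_mul_eq_mul_div, le_div_iff₀ hc0, mul_comm]
  exact sq_le_sq₀ (by positivity) (mul_nonneg (by linarith) (norm_nonneg u)) |>.1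
    (by rwa [mul_pow])

end Cocoercive

lemma lipschitzWith_inv_smul_sub_of_norm_le {T : E → E} {K η : ℝ} (hη : 0 < η)
    (hK : ∀ x y, ‖(x - y) - (T x - T y)‖ ≤ K * ‖x - y‖) :
    LipschitzWith (Real.toNNReal (K / η)) fun x => (1 / η) • (x - T x) := by
  refine LipschitzWith.of_dist_le_mul fun x y => ?_
  rw [dist_eq_norm, dist_eq_norm, ← smul_sub, sub_sub_sub_comm, norm_smul,
    Real.norm_of_nonneg (by positivity)]
  calc 1 / η * ‖(x - y) - (T x - T y)‖ ≤ 1 / η * (K * ‖x - y‖) := by gcongr; exact hK x y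
    _ = K / η * ‖x - y‖ := by ring
    _ ≤ Real.toNNReal (K / η) * ‖x - y‖ := by gcongr; exact Real.le_coe_toNNReal _

theorem stmt6 {n : ℕ} (f : EuclideanSpace ℝ (Fin n) → ℝ) (ρ η : ℝ)
    (hρ : 0 < ρ) (hη : 0 < η) (hηρ : η < 1 / ρ)
    (hwc : ConvexOn ℝ Set.univ (fun z => f z + ρ / 2 * ‖z‖ ^ 2))
    (prox : EuclideanSpace ℝ (Fin n) → EuclideanSpace ℝ (Fin n))
    (hprox : ∀ x, IsMinOn (fun y => f y + ‖y - x‖ ^ 2 / (2 * η)) Set.univ (prox x)) :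
    (η * ρ ≤ 1 / 2 →
      LipschitzWith (Real.toNNReal (1 / η)) (fun x => (1 / η) • (x - prox x))) ∧
    (1 / 2 ≤ η * ρ →
      LipschitzWith (Real.toNNReal (ρ / (1 - η * ρ)))
        (fun x => (1 / η) • (x - prox x))) := by
  have hc : 0 < 1 - η * ρ := by
    have := (lt_div_iff₀ hρ).1 hηρ
    linarith
  have hcoco := cocoercive_of_isMinOn_prox hη hwc hprox
  refine ⟨fun hhalf => ?_, fun hhalf => ?_⟩
  · refine lipschitzWith_inv_smul_sub_of_norm_le (K := 1) hη fun x y => ?_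
    rw [one_mul]
    exact norm_sub_le_of_cocoercive_of_half_le (hcoco x y) (by linarith)
  · have hL : (1 - (1 - η * ρ)) / (1 - η * ρ) / η = ρ / (1 - η * ρ) := by
      field_simp
      ring
    rw [← hL]
    exact lipschitzWith_inv_smul_sub_of_norm_le hη fun x y =>
      norm_sub_le_of_cocoercive_of_le_half (hcoco x y) hc (by linarith)
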